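/- Uniqueness of the Bellman flow solution: let π be a policy of a finite discounted MDP. If m : S×A → ℝ satisfies m(s',a') = (1−γ)·ρ(s')·π(a'|s') + γ·∑_{s∈S} ∑_{a∈A} π(a'|s') P(s'|s,a) m(s,a) for all (s',a') ∈ S×A, then m = μ^π_ρ. -/
import Mathlib


open Finset

noncomputable section

variable {S A : Type*} [Fintype S] [Fintype A]

/-- The t-step state distribution of policy `π` started from `ρ`. -/
def stateDist (P : S → A → S → ℝ) (π : S → A → ℝ) (ρ : S → ℝ) : ℕ → S → ℝ
  | 0 => ρ
  | t + 1 => fun s' => ∑ s, ∑ a, stateDist P π ρ t s * π s a * P s a s'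

/-- The discounted state visitation distribution `d^π_ρ`. -/
def dvisit (P : S → A → S → ℝ) (π : S → A → ℝ) (ρ : S → ℝ) (γ : ℝ) (s : S) : ℝ :=
  (1 - γ) * ∑' t : ℕ, γ ^ t * stateDist P π ρ t s

/-- Total variation distance between real-valued functions on a finite set. -/
def dTV {X : Type*} [Fintype X] (p q : X → ℝ) : ℝ := ∑ x, |p x - q x|

lemma stateDist_nonneg (P : S → A → S → ℝ) (π : S → A → ℝ) (ρ : S → ℝ)
    (hP0 : ∀ s a s', 0 ≤ P s a s') (hρ0 : ∀ s, 0 ≤ ρ s)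
    (hπ0 : ∀ s a, 0 ≤ π s a) : ∀ t s, 0 ≤ stateDist P π ρ t s := by
  intro t
  induction t with
  | zero => exact hρ0
  | succ t ih =>
    intro s'
    exact Finset.sum_nonneg fun s _ => Finset.sum_nonneg fun a _ =>
      mul_nonneg (mul_nonneg (ih s) (hπ0 s a)) (hP0 s a s')

lemma stateDist_sum (P : S → A → S → ℝ) (π : S → A → ℝ) (ρ : S → ℝ)
    (hP1 : ∀ s a, ∑ s', P s a s' = 1) (hρ1 : ∑ s, ρ s = 1)
    (hπ1 : ∀ s, ∑ a, π s a = 1) : ∀ t, ∑ s, stateDist P π ρ t s = 1 := by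
  intro t
  induction t with
  | zero => exact hρ1
  | succ t ih =>
    show ∑ s' : S, ∑ s, ∑ a, stateDist P π ρ t s * π s a * P s a s' = 1
    rw [Finset.sum_comm]
    have h : ∀ s : S, ∑ s' : S, ∑ a, stateDist P π ρ t s * π s a * P s a s'
        = stateDist P π ρ t s := by
      intro s
      rw [Finset.sum_comm]
      have : ∀ a : A, ∑ s' : S, stateDist P π ρ t s * π s a * P s a s'
          = stateDist P π ρ t s * π s a := by
        intro a
        rw [← Finset.mul_sum, hP1, mul_one]
      rw [Finset.sum_congr rfl fun a _ => this a, ← Finset.mul_sum, hπ1, mul_one]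
    rw [Finset.sum_congr rfl fun s _ => h s, ih]

lemma stateDist_le_one (P : S → A → S → ℝ) (π : S → A → ℝ) (ρ : S → ℝ)
    (hP0 : ∀ s a s', 0 ≤ P s a s') (hP1 : ∀ s a, ∑ s', P s a s' = 1)
    (hρ0 : ∀ s, 0 ≤ ρ s) (hρ1 : ∑ s, ρ s = 1)
    (hπ0 : ∀ s a, 0 ≤ π s a) (hπ1 : ∀ s, ∑ a, π s a = 1) :
    ∀ t s, stateDist P π ρ t s ≤ 1 := by
  intro t s
  calc stateDist P π ρ t s ≤ ∑ s', stateDist P π ρ t s' :=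
        Finset.single_le_sum (fun s' _ => stateDist_nonneg P π ρ hP0 hρ0 hπ0 t s')
          (Finset.mem_univ s)
    _ = 1 := stateDist_sum P π ρ hP1 hρ1 hπ1 t

lemma stateDist_summable (P : S → A → S → ℝ) (π : S → A → ℝ) (ρ : S → ℝ)
    {γ : ℝ} (hγ0 : 0 ≤ γ) (hγ1 : γ < 1)
    (hP0 : ∀ s a s', 0 ≤ P s a s') (hP1 : ∀ s a, ∑ s', P s a s' = 1)
    (hρ0 : ∀ s, 0 ≤ ρ s) (hρ1 : ∑ s, ρ s = 1)
    (hπ0 : ∀ s a, 0 ≤ π s a) (hπ1 : ∀ s, ∑ a, π s a = 1) (s : S) :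
    Summable (fun t : ℕ => γ ^ t * stateDist P π ρ t s) := by
  apply Summable.of_nonneg_of_le
    (fun t => mul_nonneg (pow_nonneg hγ0 t) (stateDist_nonneg P π ρ hP0 hρ0 hπ0 t s))
    (fun t => ?_) (summable_geometric_of_lt_one hγ0 hγ1)
  calc γ ^ t * stateDist P π ρ t s ≤ γ ^ t * 1 := by
        exact mul_le_mul_of_nonneg_left
          (stateDist_le_one P π ρ hP0 hP1 hρ0 hρ1 hπ0 hπ1 t s) (pow_nonneg hγ0 t)
    _ = γ ^ t := mul_one _

/-- The flow equation satisfied by `dvisit`. -/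
lemma dvisit_flow (P : S → A → S → ℝ) (π : S → A → ℝ) (ρ : S → ℝ)
    {γ : ℝ} (hγ0 : 0 ≤ γ) (hγ1 : γ < 1)
    (hP0 : ∀ s a s', 0 ≤ P s a s') (hP1 : ∀ s a, ∑ s', P s a s' = 1)
    (hρ0 : ∀ s, 0 ≤ ρ s) (hρ1 : ∑ s, ρ s = 1)
    (hπ0 : ∀ s a, 0 ≤ π s a) (hπ1 : ∀ s, ∑ a, π s a = 1) (s' : S) :
    dvisit P π ρ γ s'
      = (1 - γ) * ρ s' + γ * ∑ s, ∑ a, dvisit P π ρ γ s * π s a * P s a s' := by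
  have hsum := fun s => stateDist_summable P π ρ hγ0 hγ1 hP0 hP1 hρ0 hρ1 hπ0 hπ1 s
  set D : S → ℝ := fun s => ∑' t : ℕ, γ ^ t * stateDist P π ρ t s with hD
  have key : D s' = ρ s' + γ * ∑ s, ∑ a, D s * π s a * P s a s' := by
    have h0 : D s' = ρ s' + ∑' t : ℕ, γ ^ (t + 1) * stateDist P π ρ (t + 1) s' := by
      show (∑' t : ℕ, γ ^ t * stateDist P π ρ t s') = _
      rw [Summable.tsum_eq_zero_add (hsum s')]
      congr 1
      simp [stateDist]
    rw [h0]
    congr 1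
    have h1 : ∀ t : ℕ, γ ^ (t + 1) * stateDist P π ρ (t + 1) s'
        = ∑ s, ∑ a, (γ ^ t * stateDist P π ρ t s) * (π s a * P s a s' * γ) := by
      intro t
      show γ ^ (t + 1) * (∑ s, ∑ a, stateDist P π ρ t s * π s a * P s a s') = _
      rw [Finset.mul_sum]
      refine Finset.sum_congr rfl fun s _ => ?_
      rw [Finset.mul_sum]
      exact Finset.sum_congr rfl fun a _ => by ring
    rw [tsum_congr h1, Summable.tsum_finsetSum (fun s _ => summable_sum fun a _ => (hsum s).mul_right _)]
    rw [Finset.mul_sum]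
    refine Finset.sum_congr rfl fun s _ => ?_
    rw [Summable.tsum_finsetSum (fun a _ => (hsum s).mul_right _), Finset.mul_sum]
    refine Finset.sum_congr rfl fun a _ => ?_
    rw [tsum_mul_right]
    show D s * (π s a * P s a s' * γ) = γ * (D s * π s a * P s a s')
    ring
  show (1 - γ) * D s' = _
  rw [key]
  have hfac : ∑ s, ∑ a, dvisit P π ρ γ s * π s a * P s a s'
      = (1 - γ) * ∑ s, ∑ a, D s * π s a * P s a s' := by
    rw [Finset.mul_sum]
    refine Finset.sum_congr rfl fun s _ => ?_
    rw [Finset.mul_sum]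
    refine Finset.sum_congr rfl fun a _ => ?_
    have hd : dvisit P π ρ γ s = (1 - γ) * D s := rfl
    rw [hd]; ring
  rw [hfac]; ring

/-- Uniqueness of the Bellman flow solution: any `m` satisfying the flow equation
equals the discounted state-action visitation distribution `μ^π_ρ`. -/
theorem bellman_flow_unique
    [Nonempty S] [Nonempty A]
    (P : S → A → S → ℝ) (γ : ℝ) (ρ : S → ℝ)
    (hγ0 : 0 ≤ γ) (hγ1 : γ < 1)
    (hP0 : ∀ s a s', 0 ≤ P s a s') (hP1 : ∀ s a, ∑ s', P s a s' = 1)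
    (hρ0 : ∀ s, 0 ≤ ρ s) (hρ1 : ∑ s, ρ s = 1)
    (π : S → A → ℝ)
    (hπ0 : ∀ s a, 0 ≤ π s a) (hπ1 : ∀ s, ∑ a, π s a = 1)
    (m : S → A → ℝ)
    (hm : ∀ s' a', m s' a'
      = (1 - γ) * ρ s' * π s' a'
        + γ * ∑ s, ∑ a, π s' a' * P s a s' * m s a) :
    ∀ s a, m s a = dvisit P π ρ γ s * π s a := by
  set μ : S → A → ℝ := fun s a => dvisit P π ρ γ s * π s a with hμ
  have hμflow : ∀ s' a', μ s' a'
      = (1 - γ) * ρ s' * π s' a' + γ * ∑ s, ∑ a, π s' a' * P s a s' * μ s a := by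
    intro s' a'
    have h := dvisit_flow P π ρ hγ0 hγ1 hP0 hP1 hρ0 hρ1 hπ0 hπ1 s'
    have hswap : ∑ s, ∑ a, π s' a' * P s a s' * μ s a
        = (∑ s, ∑ a, dvisit P π ρ γ s * π s a * P s a s') * π s' a' := by
      rw [Finset.sum_mul]
      refine Finset.sum_congr rfl fun s _ => ?_
      rw [Finset.sum_mul]
      refine Finset.sum_congr rfl fun a _ => ?_
      show π s' a' * P s a s' * (dvisit P π ρ γ s * π s a) = _
      ring
    show dvisit P π ρ γ s' * π s' a' = _
    rw [hswap, h]
    ring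
  set e : S → A → ℝ := fun s a => m s a - μ s a with he
  have heflow : ∀ s' a', e s' a' = γ * ∑ s, ∑ a, π s' a' * P s a s' * e s a := by
    intro s' a'
    have : e s' a' = m s' a' - μ s' a' := rfl
    rw [this, hm s' a', hμflow s' a']
    have : ∀ s, ∑ a, π s' a' * P s a s' * e s a
        = ∑ a, π s' a' * P s a s' * m s a - ∑ a, π s' a' * P s a s' * μ s a := by
      intro s
      rw [← Finset.sum_sub_distrib]
      refine Finset.sum_congr rfl fun a _ => ?_
      show π s' a' * P s a s' * (m s a - μ s a)
          = π s' a' * P s a s' * m s a - π s' a' * P s a s' * μ s a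
      ring
    rw [Finset.sum_congr rfl fun s _ => this s, Finset.sum_sub_distrib]
    ring
  set E : ℝ := ∑ s, ∑ a, |e s a| with hE
  have hE0 : 0 ≤ E :=
    Finset.sum_nonneg fun s _ => Finset.sum_nonneg fun a _ => abs_nonneg _
  have hbound : ∀ s' a', |e s' a'| ≤ γ * ∑ s, ∑ a, π s' a' * P s a s' * |e s a| := by
    intro s' a'
    rw [heflow s' a', abs_mul, abs_of_nonneg hγ0]
    refine mul_le_mul_of_nonneg_left ?_ hγ0
    calc |∑ s, ∑ a, π s' a' * P s a s' * e s a|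
        ≤ ∑ s, |∑ a, π s' a' * P s a s' * e s a| := Finset.abs_sum_le_sum_abs _ _
      _ ≤ ∑ s, ∑ a, |π s' a' * P s a s' * e s a| :=
          Finset.sum_le_sum fun s _ => Finset.abs_sum_le_sum_abs _ _
      _ = ∑ s, ∑ a, π s' a' * P s a s' * |e s a| := by
          refine Finset.sum_congr rfl fun s _ => Finset.sum_congr rfl fun a _ => ?_
          rw [abs_mul, abs_mul, abs_of_nonneg (hπ0 s' a'), abs_of_nonneg (hP0 s a s')]
  have hcontr : E ≤ γ * E := by
    have step1 : ∀ s' : S, ∑ a' : A, ∑ s, ∑ a, π s' a' * P s a s' * |e s a|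
        = ∑ s, ∑ a, P s a s' * |e s a| := by
      intro s'
      have : ∀ a' : A, ∑ s, ∑ a, π s' a' * P s a s' * |e s a|
          = π s' a' * ∑ s, ∑ a, P s a s' * |e s a| := by
        intro a'
        rw [Finset.mul_sum]
        refine Finset.sum_congr rfl fun s _ => ?_
        rw [Finset.mul_sum]
        exact Finset.sum_congr rfl fun a _ => by ring
      rw [Finset.sum_congr rfl fun a' _ => this a', ← Finset.sum_mul, hπ1, one_mul]
    have step2 : ∑ s' : S, ∑ s, ∑ a, P s a s' * |e s a| = E := by
      rw [Finset.sum_comm]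
      refine Finset.sum_congr rfl fun s _ => ?_
      rw [Finset.sum_comm]
      refine Finset.sum_congr rfl fun a _ => ?_
      rw [← Finset.sum_mul, hP1, one_mul]
    calc E ≤ ∑ s', ∑ a', γ * ∑ s, ∑ a, π s' a' * P s a s' * |e s a| :=
          Finset.sum_le_sum fun s' _ => Finset.sum_le_sum fun a' _ => hbound s' a'
      _ = γ * ∑ s', ∑ a', ∑ s, ∑ a, π s' a' * P s a s' * |e s a| := by
          rw [Finset.mul_sum]
          exact Finset.sum_congr rfl fun s' _ => by rw [Finset.mul_sum]
      _ = γ * E := by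
          rw [Finset.sum_congr rfl fun s' _ => step1 s', step2]
  have hEzero : E = 0 := by nlinarith
  intro s a
  have habs : |e s a| = 0 := by
    have h1 : ∑ a', |e s a'| = 0 := by
      have := (Finset.sum_eq_zero_iff_of_nonneg
        (fun s' (_ : s' ∈ Finset.univ) => Finset.sum_nonneg
          fun a' _ => abs_nonneg (e s' a'))).mp hEzero s (Finset.mem_univ s)
      exact this
    exact (Finset.sum_eq_zero_iff_of_nonneg
      (fun a' _ => abs_nonneg (e s a'))).mp h1 a (Finset.mem_univ a)
  have : e s a = 0 := abs_eq_zero.mp habs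
  have h2 : m s a - dvisit P π ρ γ s * π s a = 0 := this
  linarith
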